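/- arXiv:2302.03461 — 4 statements merged into one kernel-verified Lean document; each statement's English description precedes it below -/
import Mathlib

section
/- Let n ≥ 1 be an integer and let p, q, r be three pairwise distinct points of ℝ² all of whose coordinates are integers in {0, 1, …, n−1}. If q does not lie on the segment [p, r], then the Euclidean distance from q to the segment [p, r] is at least 1/(√2 · n). -/
/-!
If `q` is off the line `pr`, then for every `x` on the segment the cross product
`(r - p) × (q - x)` equals `(r - p) × (q - p)`, a nonzero integer, so
`1 ≤ ‖r - p‖ * dist q x ≤ √2 n * dist q x`. If `q` is on the line but off the segment, then
`p` or `r` lies between `q` and `x`, so `dist q x` is at least the distance between two distinct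
lattice points, which is at least `1`.
-/

open Metric

theorem min_dist_le_dist_of_collinear {V P : Type*} [NormedAddCommGroup V] [NormedSpace ℝ V]
    [MetricSpace P] [NormedAddTorsor V P] {p q r x : P} (hcol : Collinear ℝ {q, p, r})
    (hq : ¬Wbtw ℝ p q r) (hx : Wbtw ℝ p x r) : min (dist q p) (dist q r) ≤ dist q x := by
  rcases hcol.wbtw_or_wbtw_or_wbtw with h | h | h
  · exact (min_le_left _ _).trans <| by
      linarith [(h.trans_right_left hx).dist_add_dist, dist_nonneg (x := p) (y := x)]
  · exact (min_le_right _ _).trans <| by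
      linarith [(h.symm.trans_right_left hx.symm).dist_add_dist, dist_nonneg (x := r) (y := x)]
  · exact absurd h.symm hq

section Lattice

variable {ι : Type*}

def IsLatticePoint (x : EuclideanSpace ℝ ι) : Prop := ∀ i, ∃ k : ℤ, x i = (k : ℝ)

def IsGridPoint (n : ℕ) (x : EuclideanSpace ℝ ι) : Prop :=
  ∀ i, ∃ k : ℕ, k < n ∧ x i = (k : ℝ)

theorem IsLatticePoint.sub {x y : EuclideanSpace ℝ ι} (hx : IsLatticePoint x)
    (hy : IsLatticePoint y) : IsLatticePoint (x - y) := fun i => by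
  obtain ⟨k, hk⟩ := hx i
  obtain ⟨l, hl⟩ := hy i
  exact ⟨k - l, by simp [hk, hl]⟩

theorem IsLatticePoint.one_le_dist [Fintype ι] {x y : EuclideanSpace ℝ ι}
    (hx : IsLatticePoint x) (hy : IsLatticePoint y) (hne : x ≠ y) : 1 ≤ dist x y := by
  obtain ⟨i, hi⟩ : ∃ i, x i ≠ y i := by
    by_contra! h
    exact hne (PiLp.ext h)
  obtain ⟨k, hk⟩ := hx i
  obtain ⟨l, hl⟩ := hy i
  replace hi : k - l ≠ 0 := fun h => hi (by rw [hk, hl, sub_eq_zero.1 h])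
  calc (1 : ℝ) ≤ |((k - l : ℤ) : ℝ)| := by exact_mod_cast Int.one_le_abs hi
    _ = dist (x i) (y i) := by rw [Real.dist_eq, hk, hl, Int.cast_sub]
    _ ≤ dist x y := PiLp.dist_apply_le x y i

theorem IsGridPoint.isLatticePoint {n : ℕ} {x : EuclideanSpace ℝ ι} (hx : IsGridPoint n x) :
    IsLatticePoint x := fun i => by
  obtain ⟨k, -, hk⟩ := hx i
  exact ⟨k, by simp [hk]⟩

theorem IsGridPoint.norm_sub_le [Fintype ι] {n : ℕ} {x y : EuclideanSpace ℝ ι}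
    (hx : IsGridPoint n x) (hy : IsGridPoint n y) : ‖x - y‖ ≤ √(Fintype.card ι) * n := by
  have hcoord : ∀ i, ‖(x - y) i‖ ^ 2 ≤ (n : ℝ) ^ 2 := fun i => by
    obtain ⟨k, hk, hxk⟩ := hx i
    obtain ⟨l, hl, hyl⟩ := hy i
    rw [PiLp.sub_apply, hxk, hyl, Real.norm_eq_abs, sq_abs]
    have hk' : (k : ℝ) < n := by exact_mod_cast hk
    have hl' : (l : ℝ) < n := by exact_mod_cast hl
    nlinarith [Nat.cast_nonneg (α := ℝ) k, Nat.cast_nonneg (α := ℝ) l]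
  calc ‖x - y‖ ≤ √(∑ _i : ι, (n : ℝ) ^ 2) :=
        (EuclideanSpace.norm_eq _).trans_le
          (Real.sqrt_le_sqrt (Finset.sum_le_sum fun i _ => hcoord i))
    _ = √(Fintype.card ι) * n := by
      rw [Finset.sum_const, Finset.card_univ, nsmul_eq_mul, Real.sqrt_mul (by positivity),
        Real.sqrt_sq (by positivity)]

end Lattice

section Cross

def cross (u v : EuclideanSpace ℝ (Fin 2)) : ℝ := u 0 * v 1 - u 1 * v 0

theorem abs_cross_le (u v : EuclideanSpace ℝ (Fin 2)) : |cross u v| ≤ ‖u‖ * ‖v‖ := by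
  simp only [cross, EuclideanSpace.norm_eq, Real.norm_eq_abs, sq_abs, Fin.sum_univ_two]
  rw [← Real.sqrt_mul (by positivity)]
  apply Real.abs_le_sqrt
  nlinarith [sq_nonneg (u 0 * v 0 + u 1 * v 1)]

theorem cross_sub_smul_self (u w : EuclideanSpace ℝ (Fin 2)) (t : ℝ) :
    cross u (w - t • u) = cross u w := by
  simp only [cross, PiLp.sub_apply, PiLp.smul_apply, smul_eq_mul]
  ring

theorem abs_cross_le_norm_mul_dist {p q r x : EuclideanSpace ℝ (Fin 2)}
    (hx : x ∈ segment ℝ p r) : |cross (r - p) (q - p)| ≤ ‖r - p‖ * dist q x := by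
  rw [segment_eq_image'] at hx
  obtain ⟨t, -, rfl⟩ := hx
  rw [dist_eq_norm, ← cross_sub_smul_self (r - p) (q - p) t, sub_sub]
  exact abs_cross_le _ _

theorem exists_eq_smul_of_cross_eq_zero {u w : EuclideanSpace ℝ (Fin 2)} (hu : u ≠ 0)
    (h : cross u w = 0) : ∃ s : ℝ, w = s • u := by
  have hcoord : u 0 ≠ 0 ∨ u 1 ≠ 0 := by
    by_contra! h0
    exact hu (by ext i; fin_cases i <;> simp [h0.1, h0.2])
  unfold cross at h
  rcases hcoord with h0 | h1
  · refine ⟨w 0 / u 0, ?_⟩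
    ext i
    fin_cases i <;>
      simp only [Fin.zero_eta, Fin.mk_one, Fin.isValue, PiLp.smul_apply, smul_eq_mul] <;>
      field_simp; linarith
  · refine ⟨w 1 / u 1, ?_⟩
    ext i
    fin_cases i <;>
      simp only [Fin.zero_eta, Fin.mk_one, Fin.isValue, PiLp.smul_apply, smul_eq_mul] <;>
      field_simp; linarith

theorem collinear_of_cross_eq_zero {p q r : EuclideanSpace ℝ (Fin 2)}
    (h : cross (r - p) (q - p) = 0) : Collinear ℝ {q, p, r} := by
  rcases eq_or_ne r p with rfl | hrp
  · simpa using collinear_pair ℝ q r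
  obtain ⟨s, hs⟩ := exists_eq_smul_of_cross_eq_zero (sub_ne_zero.2 hrp) h
  apply collinear_insert_of_mem_affineSpan_pair
  rw [eq_add_of_sub_eq hs, ← AffineMap.lineMap_apply_module']
  exact AffineMap.lineMap_mem_affineSpan_pair _ _ _

theorem IsLatticePoint.one_le_abs_cross {u w : EuclideanSpace ℝ (Fin 2)}
    (hu : IsLatticePoint u) (hw : IsLatticePoint w) (h : cross u w ≠ 0) : 1 ≤ |cross u w| := by
  obtain ⟨⟨a, ha⟩, ⟨b, hb⟩⟩ := And.intro (hu 0) (hu 1)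
  obtain ⟨⟨c, hc⟩, ⟨d, hd⟩⟩ := And.intro (hw 0) (hw 1)
  have hint : cross u w = ((a * d - b * c : ℤ) : ℝ) := by
    rw [cross, ha, hb, hc, hd]; push_cast; rfl
  rw [hint] at h ⊢
  exact_mod_cast Int.one_le_abs (by exact_mod_cast h)

end Cross

theorem stmt0_general (n : ℕ) (p q r : EuclideanSpace ℝ (Fin 2))
    (hp : ∀ i, ∃ k : ℕ, k < n ∧ p i = k)
    (hq : ∀ i, ∃ k : ℕ, k < n ∧ q i = k)
    (hr : ∀ i, ∃ k : ℕ, k < n ∧ r i = k)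
    (hpq : p ≠ q) (hqr : q ≠ r)
    (hseg : q ∉ segment ℝ p r) :
    1 / (Real.sqrt 2 * n) ≤ Metric.infDist q (segment ℝ p r) := by
  have hpL := IsGridPoint.isLatticePoint hp
  have hqL := IsGridPoint.isLatticePoint hq
  have hrL := IsGridPoint.isLatticePoint hr
  have hn : (1 : ℝ) ≤ n := by
    obtain ⟨k, hk, -⟩ := hq 0
    exact_mod_cast k.zero_le.trans_lt hk
  rw [le_infDist ⟨p, left_mem_segment ℝ p r⟩]
  intro x hx
  rw [div_le_iff₀' (by positivity)]
  by_cases hcross : cross (r - p) (q - p) = 0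
  · have hmin := min_dist_le_dist_of_collinear (collinear_of_cross_eq_zero hcross)
      (mt mem_segment_iff_wbtw.2 hseg) (mem_segment_iff_wbtw.1 hx)
    have hqx := (le_min (hqL.one_le_dist hpL hpq.symm) (hqL.one_le_dist hrL hqr)).trans hmin
    exact one_le_mul_of_one_le_of_one_le
      (one_le_mul_of_one_le_of_one_le Real.one_lt_sqrt_two.le hn) hqx
  · calc 1 ≤ |cross (r - p) (q - p)| := (hrL.sub hpL).one_le_abs_cross (hqL.sub hpL) hcross
      _ ≤ ‖r - p‖ * dist q x := abs_cross_le_norm_mul_dist hx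
      _ ≤ √2 * n * dist q x := by
          gcongr
          simpa using IsGridPoint.norm_sub_le hr hp

/-- Lemma 2 of the paper: a grid point not on a segment between grid points
is at Euclidean distance at least `1 / (√2 · n)` from the segment. -/
theorem stmt0 (n : ℕ) (hn : 1 ≤ n) (p q r : EuclideanSpace ℝ (Fin 2))
    (hp : ∀ i, ∃ k : ℕ, k < n ∧ p i = k)
    (hq : ∀ i, ∃ k : ℕ, k < n ∧ q i = k)
    (hr : ∀ i, ∃ k : ℕ, k < n ∧ r i = k)
    (hpq : p ≠ q) (hpr : p ≠ r) (hqr : q ≠ r)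
    (hseg : q ∉ segment ℝ p r) :
    1 / (Real.sqrt 2 * n) ≤ Metric.infDist q (segment ℝ p r) :=
  stmt0_general n p q r hp hq hr hpq hqr hseg
end

section
/- Let n ≥ 1 be an integer and let p = (a, b) and r = (c, d) be points of ℝ² whose coordinates a, b, c, d are integers in {0, 1, …, n−1}, with a ≠ c and b ≠ d. Then for every point z on the segment [p, r], if the first coordinate of z is an integer and the second coordinate of z is not an integer, then the distance from the second coordinate of z to the nearest integer is at least 1/n; and symmetrically, if the second coordinate of z is an integer and the first is not, then the distance from the first coordinate of z to the nearest integer is at least 1/n. -/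
/-- Key arithmetic lemma: if a convex combination of distinct integers `a, c`
is an integer `m`, then the corresponding combination of `b, d` is at distance
at least `1 / |c - a|` from any integer it does not equal. -/
lemma key_lem (n : ℕ) (a b c d m : ℤ) (hca : c ≠ a) (hb1 : |c - a| ≤ (n : ℤ))
    (u v : ℝ) (huv : u + v = 1) (hm : u * a + v * c = (m : ℝ)) :
    ∀ k : ℤ, u * b + v * d ≠ (k : ℝ) → 1 / (n : ℝ) ≤ |u * b + v * d - k| := by
  intro k hne
  have hca' : (c : ℝ) - a ≠ 0 := by
    simpa [sub_eq_zero] using fun h => hca (by exact_mod_cast h)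
  have hu : u = 1 - v := by linarith
  have hv : v * ((c : ℝ) - a) = (m : ℝ) - a := by
    rw [hu] at hm; ring_nf at hm ⊢; linarith
  set N : ℤ := (c - a) * (b - k) + (m - a) * (d - b) with hN
  have hNr : ((c : ℝ) - a) * (u * b + v * d - k) = (N : ℝ) := by
    have : u * b + v * d = b + v * ((d : ℝ) - b) := by rw [hu]; ring
    rw [this]
    push_cast [hN]
    linear_combination ((d : ℝ) - b) * hv
  have hNne : N ≠ 0 := by
    intro h
    apply hne
    have := hNr
    rw [h] at this
    push_cast at this
    have h2 : u * b + v * d - k = 0 := by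
      rcases mul_eq_zero.mp this with h' | h'
      · exact absurd h' hca'
      · exact h'
    linarith
  have hN1 : (1 : ℝ) ≤ |(N : ℝ)| := by
    have : 1 ≤ |N| := Int.one_le_abs hNne
    exact_mod_cast (by exact_mod_cast this : (1 : ℝ) ≤ (|N| : ℝ))
  have hcaabs : |(c : ℝ) - a| ≤ (n : ℝ) := by
    have : ((|c - a| : ℤ) : ℝ) ≤ (n : ℝ) := by exact_mod_cast hb1
    simpa [abs_sub_comm] using (by push_cast at this ⊢; exact this : |(c : ℝ) - a| ≤ n)
  have hcapos : 0 < |(c : ℝ) - a| := abs_pos.mpr hca'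
  have hnpos : (0 : ℝ) < n := lt_of_lt_of_le hcapos hcaabs
  have habs : |(c : ℝ) - a| * |u * b + v * d - k| = |(N : ℝ)| := by
    rw [← abs_mul, hNr]
  rw [div_le_iff₀ hnpos]
  calc (1 : ℝ) ≤ |(N : ℝ)| := hN1
    _ = |(c : ℝ) - a| * |u * b + v * d - k| := habs.symm
    _ ≤ |u * b + v * d - k| * n := by
        rw [mul_comm]
        exact mul_le_mul_of_nonneg_left hcaabs (abs_nonneg _)

/-- Claim (*) inside the proof of Lemma 2 of the paper: on a segment between
grid points that is not parallel to either axis, a point with exactly one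
integer coordinate has its other coordinate at distance at least `1/n` from
the nearest integer. -/
theorem stmt1 (n : ℕ) (hn : 1 ≤ n) (a b c d : ℤ)
    (ha : 0 ≤ a ∧ a ≤ (n : ℤ) - 1) (hb : 0 ≤ b ∧ b ≤ (n : ℤ) - 1)
    (hc : 0 ≤ c ∧ c ≤ (n : ℤ) - 1) (hd : 0 ≤ d ∧ d ≤ (n : ℤ) - 1)
    (hac : a ≠ c) (hbd : b ≠ d)
    (p r z : EuclideanSpace ℝ (Fin 2))
    (hp0 : p 0 = a) (hp1 : p 1 = b) (hr0 : r 0 = c) (hr1 : r 1 = d)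
    (hz : z ∈ segment ℝ p r) :
    (((∃ k : ℤ, z 0 = k) ∧ ¬ (∃ k : ℤ, z 1 = k)) →
      ∀ k : ℤ, 1 / (n : ℝ) ≤ |z 1 - k|) ∧
    (((∃ k : ℤ, z 1 = k) ∧ ¬ (∃ k : ℤ, z 0 = k)) →
      ∀ k : ℤ, 1 / (n : ℝ) ≤ |z 0 - k|) := by
  obtain ⟨u, v, hu, hv, huv, hzeq⟩ := hz
  have hz0 : z 0 = u * a + v * c := by
    rw [← hzeq]; simp [hp0, hr0, PiLp.add_apply, PiLp.smul_apply, smul_eq_mul]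
  have hz1 : z 1 = u * b + v * d := by
    rw [← hzeq]; simp [hp1, hr1, PiLp.add_apply, PiLp.smul_apply, smul_eq_mul]
  have hca : |c - a| ≤ (n : ℤ) := by
    rcases abs_cases (c - a) with ⟨h, _⟩ | ⟨h, _⟩ <;> omega
  have hdb : |d - b| ≤ (n : ℤ) := by
    rcases abs_cases (d - b) with ⟨h, _⟩ | ⟨h, _⟩ <;> omega
  constructor
  · rintro ⟨⟨m, hm⟩, hnint⟩ k
    rw [hz0] at hm
    have hne : u * b + v * d ≠ (k : ℝ) := by
      intro h; exact hnint ⟨k, by rw [hz1, h]⟩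
    rw [hz1]
    exact key_lem n a b c d m (Ne.symm hac) hca u v huv hm k hne
  · rintro ⟨⟨m, hm⟩, hnint⟩ k
    rw [hz1] at hm
    have hne : u * a + v * c ≠ (k : ℝ) := by
      intro h; exact hnint ⟨k, by rw [hz0, h]⟩
    rw [hz0]
    exact key_lem n b a d c m (Ne.symm hbd) hdb u v huv hm k hne
end

section
/- Let p, q'', r'' be three non-collinear points of ℝ² (forming a triangle) such that the interior angles of the triangle at q'' and at r'' are each at most π/2. Let q = q'' + t·(q'' − p) for some real t ≥ 0 and let r = r'' + s·(r'' − p) for some real s ≥ 0 (that is, q lies on the ray starting at q'' with direction q'' − p, and r lies on the ray starting at r'' with direction r'' − p). Then the Euclidean distance between q and r is greater than or equal to the Euclidean distance between q'' and r''. -/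
/-!
Write `u = q'' - r''` and `w = q - r - u = t • (q'' - p) - s • (r'' - p)`. The two base angles
being at most `π / 2` says exactly that `⟪u, q'' - p⟫ ≥ 0` and `⟪u, r'' - p⟫ ≤ 0`, so `⟪u, w⟫ ≥ 0`
and hence `‖u + w‖² = ‖u‖² + 2⟪u, w⟫ + ‖w‖² ≥ ‖u‖²`.
-/

open Real InnerProductGeometry RealInnerProductSpace

variable {V : Type*} [NormedAddCommGroup V] [InnerProductSpace ℝ V]

lemma inner_nonneg_of_angle_le_pi_div_two {x y : V} (h : angle x y ≤ π / 2) : 0 ≤ ⟪x, y⟫ := by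
  rw [← cos_angle_mul_norm_mul_norm]
  have : 0 ≤ cos (angle x y) :=
    cos_nonneg_of_mem_Icc ⟨by linarith [angle_nonneg x y, pi_pos], h⟩
  positivity

lemma norm_le_norm_add_of_inner_nonneg {x y : V} (h : 0 ≤ ⟪x, y⟫) : ‖x‖ ≤ ‖x + y‖ := by
  refine le_of_sq_le_sq ?_ (norm_nonneg _)
  rw [norm_add_sq_real]
  nlinarith [sq_nonneg ‖y‖]

lemma inner_sub_nonneg_of_base_angles {a b c : V} (hb : 0 ≤ ⟪a - b, c - b⟫)
    (hc : 0 ≤ ⟪a - c, b - c⟫) {t s : ℝ} (ht : 0 ≤ t) (hs : 0 ≤ s) :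
    0 ≤ ⟪b - c, t • (b - a) - s • (c - a)⟫ := by
  have hb' : ⟪b - c, b - a⟫ = ⟪a - b, c - b⟫ := by
    rw [← neg_sub c b, ← neg_sub a b, inner_neg_neg, real_inner_comm]
  have hc' : ⟪b - c, c - a⟫ = -⟪a - c, b - c⟫ := by
    rw [← neg_sub a c, inner_neg_right, real_inner_comm]
  rw [inner_sub_right, real_inner_smul_right, real_inner_smul_right, hb', hc']
  nlinarith [mul_nonneg ht hb, mul_nonneg hs hc]

theorem dist_le_dist_add_smul_sub_of_base_angles {a b c : V} (hb : 0 ≤ ⟪a - b, c - b⟫)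
    (hc : 0 ≤ ⟪a - c, b - c⟫) {t s : ℝ} (ht : 0 ≤ t) (hs : 0 ≤ s) :
    dist b c ≤ dist (b + t • (b - a)) (c + s • (c - a)) := by
  have hsplit : b + t • (b - a) - (c + s • (c - a)) = (b - c) + (t • (b - a) - s • (c - a)) := by
    module
  rw [dist_eq_norm, dist_eq_norm, hsplit]
  exact norm_le_norm_add_of_inner_nonneg (inner_sub_nonneg_of_base_angles hb hc ht hs)

theorem stmt2_general (p q'' r'' : EuclideanSpace ℝ (Fin 2))
    (hangq : InnerProductGeometry.angle (p - q'') (r'' - q'') ≤ Real.pi / 2)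
    (hangr : InnerProductGeometry.angle (p - r'') (q'' - r'') ≤ Real.pi / 2)
    (t s : ℝ) (ht : 0 ≤ t) (hs : 0 ≤ s)
    (q r : EuclideanSpace ℝ (Fin 2))
    (hq : q = q'' + t • (q'' - p)) (hr : r = r'' + s • (r'' - p)) :
    dist q'' r'' ≤ dist q r := by
  subst hq hr
  exact dist_le_dist_add_smul_sub_of_base_angles (inner_nonneg_of_angle_le_pi_div_two hangq)
    (inner_nonneg_of_angle_le_pi_div_two hangr) ht hs

/-- Claim 5 of the paper: moving two points away from the apex `p` of a
triangle `p q'' r''` along the two sides, beyond the base, does not decrease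
their distance, provided the base angles at `q''` and `r''` are acute
(at most `π/2`). -/
theorem stmt2 (p q'' r'' : EuclideanSpace ℝ (Fin 2))
    (hncol : ¬ Collinear ℝ ({p, q'', r''} : Set (EuclideanSpace ℝ (Fin 2))))
    (hangq : InnerProductGeometry.angle (p - q'') (r'' - q'') ≤ Real.pi / 2)
    (hangr : InnerProductGeometry.angle (p - r'') (q'' - r'') ≤ Real.pi / 2)
    (t s : ℝ) (ht : 0 ≤ t) (hs : 0 ≤ s)
    (q r : EuclideanSpace ℝ (Fin 2))
    (hq : q = q'' + t • (q'' - p)) (hr : r = r'' + s • (r'' - p)) :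
    dist q'' r'' ≤ dist q r :=
  stmt2_general p q'' r'' hangq hangr t s ht hs q r hq hr
end

section
/- Let n ≥ 3 be an integer and set σ = 40n³. Let u, v, w be three pairwise distinct, non-collinear points of ℝ² all of whose coordinates are integers in {0, 1, …, n−1}. Then every point x ∈ ℝ² that is at Euclidean distance at most 2 from the segment [σ·u, σ·v] and at Euclidean distance at most 2 from the segment [σ·u, σ·w] satisfies ‖x − σ·u‖_∞ ≤ 10n² + 2; that is, the margins at distance 2 of the two scaled segments sharing the endpoint σ·u intersect only inside the box of radius 10n² + 2 centered on σ·u. -/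
/-!
Write `a = v - u`, `b = w - u` and `e = x - σ • u`. The hypotheses give `‖e - T • a‖ ≤ 2` and
`‖e - S • b‖ ≤ 2` for some scalars `T, S`, hence `‖T • a - S • b‖ ≤ 4`. Taking the determinant
against `b` kills `S • b`: `|T| * |det (a, b)| ≤ 4 * ‖b‖`. Non-collinearity of the lattice points
makes `det (a, b)` a nonzero integer, so `|T| ≤ 4 * ‖b‖` and
`‖e‖ ≤ 2 + 4 * ‖a‖ * ‖b‖ ≤ 2 + 8 * n ^ 2`, which bounds both coordinates of `e`.
-/

open Metric

def det2 (a b : EuclideanSpace ℝ (Fin 2)) : ℝ := a 0 * b 1 - a 1 * b 0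

lemma abs_det2_le (a b : EuclideanSpace ℝ (Fin 2)) : |det2 a b| ≤ ‖a‖ * ‖b‖ := by
  rw [← Real.sqrt_sq (norm_nonneg a), ← Real.sqrt_sq (norm_nonneg b),
    ← Real.sqrt_mul (sq_nonneg _), EuclideanSpace.real_norm_sq_eq, EuclideanSpace.real_norm_sq_eq]
  apply Real.abs_le_sqrt
  simp only [det2, Fin.sum_univ_two]
  nlinarith [sq_nonneg (a 0 * b 0 + a 1 * b 1)]

lemma det2_smul_sub_smul (T S : ℝ) (a b : EuclideanSpace ℝ (Fin 2)) :
    det2 (T • a - S • b) b = T * det2 a b := by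
  simp only [det2, PiLp.sub_apply, PiLp.smul_apply, smul_eq_mul]
  ring

lemma det2_sub_ne_zero_of_not_collinear {u v w : EuclideanSpace ℝ (Fin 2)}
    (h : ¬ Collinear ℝ {u, v, w}) : det2 (v - u) (w - u) ≠ 0 := by
  have hind := affineIndependent_iff_not_collinear_set.mpr h
  rw [affineIndependent_iff_linearIndependent_vsub ℝ _ (0 : Fin 3),
    ← linearIndependent_equiv (finSuccAboveEquiv (0 : Fin 3))] at hind
  have hli : LinearIndependent ℝ ![v - u, w - u] := by
    convert! hind using 1
    ext i : 1
    fin_cases i <;> rfl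
  have hrows := hli.map' (WithLp.linearEquiv 2 ℝ (Fin 2 → ℝ)).toLinearMap (LinearEquiv.ker _)
  have hunit : IsUnit (Matrix.of ![⇑(v - u), ⇑(w - u)]) := by
    rw [← Matrix.linearIndependent_rows_iff_isUnit]
    convert! hrows using 1
    ext i : 1
    fin_cases i <;> rfl
  rwa [Matrix.isUnit_iff_isUnit_det, Matrix.det_fin_two, isUnit_iff_ne_zero] at hunit

lemma one_le_abs_det2 {a b : EuclideanSpace ℝ (Fin 2)} (ha : ∀ i, ∃ z : ℤ, a i = z)
    (hb : ∀ i, ∃ z : ℤ, b i = z) (hab : det2 a b ≠ 0) : 1 ≤ |det2 a b| := by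
  obtain ⟨⟨a₀, ha₀⟩, ⟨a₁, ha₁⟩⟩ := And.intro (ha 0) (ha 1)
  obtain ⟨⟨b₀, hb₀⟩, ⟨b₁, hb₁⟩⟩ := And.intro (hb 0) (hb 1)
  have hcast : det2 a b = ((a₀ * b₁ - a₁ * b₀ : ℤ) : ℝ) := by
    simp only [det2, ha₀, ha₁, hb₀, hb₁]
    push_cast
    ring
  rw [hcast] at hab ⊢
  exact_mod_cast Int.one_le_abs (by exact_mod_cast hab)

lemma norm_le_of_norm_sub_smul_le {a b e : EuclideanSpace ℝ (Fin 2)} {T S r : ℝ}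
    (hab : 1 ≤ |det2 a b|) (ha : ‖e - T • a‖ ≤ r) (hb : ‖e - S • b‖ ≤ r) :
    ‖e‖ ≤ r + 2 * r * (‖a‖ * ‖b‖) := by
  have hTS : ‖T • a - S • b‖ ≤ 2 * r := by
    calc ‖T • a - S • b‖ = ‖(e - S • b) - (e - T • a)‖ := by congr 1; abel
      _ ≤ r + r := norm_sub_le_of_le hb ha
      _ = 2 * r := by ring
  have hT : |T| ≤ 2 * r * ‖b‖ := by
    calc |T| ≤ |T| * |det2 a b| := le_mul_of_one_le_right (abs_nonneg T) hab
      _ = |det2 (T • a - S • b) b| := by rw [det2_smul_sub_smul, abs_mul]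
      _ ≤ ‖T • a - S • b‖ * ‖b‖ := abs_det2_le _ _
      _ ≤ 2 * r * ‖b‖ := by gcongr
  calc ‖e‖ = ‖(e - T • a) + T • a‖ := by rw [sub_add_cancel]
    _ ≤ r + |T| * ‖a‖ := by
      grw [norm_add_le, ha, norm_smul, Real.norm_eq_abs]
    _ ≤ r + 2 * r * (‖a‖ * ‖b‖) := by
      grw [hT]
      linarith

lemma exists_norm_sub_smul_le_of_infDist_segment_le {E : Type*} [NormedAddCommGroup E]
    [NormedSpace ℝ E] {x c d : E} {r : ℝ} (h : infDist x (segment ℝ c d) ≤ r) :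
    ∃ T : ℝ, ‖x - c - T • (d - c)‖ ≤ r := by
  have hcompact : IsCompact (segment ℝ c d) := by
    rw [← convexHull_pair]
    exact (Set.toFinite _).isCompact_convexHull ℝ
  obtain ⟨p, hp, hxp⟩ := hcompact.exists_infDist_eq_dist ⟨c, left_mem_segment ℝ c d⟩ x
  rw [segment_eq_image'] at hp
  obtain ⟨T, -, rfl⟩ := hp
  refine ⟨T, ?_⟩
  rwa [sub_sub, ← dist_eq_norm, ← hxp]

lemma sub_apply_eq_intCast_of_grid {n : ℕ} {u v : EuclideanSpace ℝ (Fin 2)}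
    (hu : ∀ i, ∃ k : ℕ, k < n ∧ u i = k) (hv : ∀ i, ∃ k : ℕ, k < n ∧ v i = k)
    (i : Fin 2) : ∃ z : ℤ, (v - u) i = z := by
  obtain ⟨k, -, hk⟩ := hu i
  obtain ⟨l, -, hl⟩ := hv i
  exact ⟨l - k, by simp [hk, hl]⟩

lemma norm_sub_sq_le_of_grid {n : ℕ} {u v : EuclideanSpace ℝ (Fin 2)}
    (hu : ∀ i, ∃ k : ℕ, k < n ∧ u i = k) (hv : ∀ i, ∃ k : ℕ, k < n ∧ v i = k) :
    ‖v - u‖ ^ 2 ≤ 2 * n ^ 2 := by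
  rw [EuclideanSpace.real_norm_sq_eq, Fin.sum_univ_two]
  have hcoord : ∀ i, (v - u) i ^ 2 ≤ n ^ 2 := by
    intro i
    obtain ⟨k, hk, hki⟩ := hu i
    obtain ⟨l, hl, hli⟩ := hv i
    have hk' : (k : ℝ) ≤ n := by exact_mod_cast hk.le
    have hl' : (l : ℝ) ≤ n := by exact_mod_cast hl.le
    rw [PiLp.sub_apply, hki, hli]
    apply sq_le_sq' <;> linarith [(k.cast_nonneg : (0:ℝ) ≤ k), (l.cast_nonneg : (0:ℝ) ≤ l)]
  linarith [hcoord 0, hcoord 1]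

lemma norm_sub_mul_norm_sub_le_of_grid {n : ℕ} {u v w : EuclideanSpace ℝ (Fin 2)}
    (hu : ∀ i, ∃ k : ℕ, k < n ∧ u i = k) (hv : ∀ i, ∃ k : ℕ, k < n ∧ v i = k)
    (hw : ∀ i, ∃ k : ℕ, k < n ∧ w i = k) :
    ‖v - u‖ * ‖w - u‖ ≤ 2 * n ^ 2 := by
  rw [← pow_le_pow_iff_left₀ (by positivity) (by positivity) two_ne_zero, mul_pow]
  calc ‖v - u‖ ^ 2 * ‖w - u‖ ^ 2 ≤ (2 * (n : ℝ) ^ 2) * (2 * n ^ 2) := by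
        gcongr
        exacts [norm_sub_sq_le_of_grid hu hv, norm_sub_sq_le_of_grid hu hw]
    _ = (2 * (n : ℝ) ^ 2) ^ 2 := by ring

theorem stmt7_general (n : ℕ) (u v w : EuclideanSpace ℝ (Fin 2))
    (hu : ∀ i, ∃ k : ℕ, k < n ∧ u i = k)
    (hv : ∀ i, ∃ k : ℕ, k < n ∧ v i = k)
    (hw : ∀ i, ∃ k : ℕ, k < n ∧ w i = k)
    (hncol : ¬ Collinear ℝ ({u, v, w} : Set (EuclideanSpace ℝ (Fin 2))))
    (x : EuclideanSpace ℝ (Fin 2))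
    (hx1 : Metric.infDist x
      (segment ℝ ((40 * (n : ℝ) ^ 3) • u) ((40 * (n : ℝ) ^ 3) • v)) ≤ 2)
    (hx2 : Metric.infDist x
      (segment ℝ ((40 * (n : ℝ) ^ 3) • u) ((40 * (n : ℝ) ^ 3) • w)) ≤ 2) :
    max |x 0 - ((40 * (n : ℝ) ^ 3) • u) 0| |x 1 - ((40 * (n : ℝ) ^ 3) • u) 1|
      ≤ 10 * (n : ℝ) ^ 2 + 2 := by
  set σ : ℝ := 40 * (n : ℝ) ^ 3
  obtain ⟨T, hT⟩ := exists_norm_sub_smul_le_of_infDist_segment_le hx1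
  obtain ⟨S, hS⟩ := exists_norm_sub_smul_le_of_infDist_segment_le hx2
  rw [← smul_sub, smul_smul] at hT hS
  have hdet : 1 ≤ |det2 (v - u) (w - u)| :=
    one_le_abs_det2 (sub_apply_eq_intCast_of_grid hu hv) (sub_apply_eq_intCast_of_grid hu hw)
      (det2_sub_ne_zero_of_not_collinear hncol)
  have hnorm := norm_le_of_norm_sub_smul_le hdet hT hS
  have hcoord : ∀ i, |x i - (σ • u) i| ≤ ‖x - σ • u‖ := fun i => by
    simpa using PiLp.norm_apply_le (x - σ • u) i
  have hbound : ‖x - σ • u‖ ≤ 10 * (n : ℝ) ^ 2 + 2 := by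
    linarith [norm_sub_mul_norm_sub_le_of_grid hu hv hw, sq_nonneg (n : ℝ)]
  exact max_le ((hcoord 0).trans hbound) ((hcoord 1).trans hbound)

/-- Claim (ii) of Section 5 of the paper: the margins at distance 2 of two
scaled segments sharing the endpoint `σ·u` (with `σ = 40n³`) intersect only
inside the box of radius `10n² + 2` (for the sup norm) centered on `σ·u`. -/
theorem stmt7 (n : ℕ) (hn : 3 ≤ n) (u v w : EuclideanSpace ℝ (Fin 2))
    (hu : ∀ i, ∃ k : ℕ, k < n ∧ u i = k)
    (hv : ∀ i, ∃ k : ℕ, k < n ∧ v i = k)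
    (hw : ∀ i, ∃ k : ℕ, k < n ∧ w i = k)
    (huv : u ≠ v) (huw : u ≠ w) (hvw : v ≠ w)
    (hncol : ¬ Collinear ℝ ({u, v, w} : Set (EuclideanSpace ℝ (Fin 2))))
    (x : EuclideanSpace ℝ (Fin 2))
    (hx1 : Metric.infDist x
      (segment ℝ ((40 * (n : ℝ) ^ 3) • u) ((40 * (n : ℝ) ^ 3) • v)) ≤ 2)
    (hx2 : Metric.infDist x
      (segment ℝ ((40 * (n : ℝ) ^ 3) • u) ((40 * (n : ℝ) ^ 3) • w)) ≤ 2) :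
    max |x 0 - ((40 * (n : ℝ) ^ 3) • u) 0| |x 1 - ((40 * (n : ℝ) ^ 3) • u) 1|
      ≤ 10 * (n : ℝ) ^ 2 + 2 :=
  stmt7_general n u v w hu hv hw hncol x hx1 hx2
end
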